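/- If E′ ⊆ E is a sub-(a,b)-module of a regular (a,b)-module E such that E/E′ has no b-torsion, then δ(E′) ≤ δ(E). -/

import Mathlib

set_option synthInstance.maxHeartbeats 1000000
set_option maxHeartbeats 1000000

open PowerSeries

noncomputable section

/-- `ℂ[[b]]`. -/
abbrev Rb := PowerSeries ℂ

variable {E : Type} [AddCommGroup E] [Module Rb E]
  [Module ℂ E] [IsScalarTower ℂ Rb E]

/-- Multiplication by `bⁿ`, i.e. the submodule `bⁿ·G` of a `ℂ[[b]]`-module. -/
def bpow (n : ℕ) (G : Submodule Rb E) : Submodule Rb E :=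
  (Ideal.span {(X : Rb) ^ n}) • G

/-- The operator `b` (multiplication by `X`) as a `ℂ`-linear endomorphism. -/
def bop : E →ₗ[ℂ] E := (LinearMap.lsmul Rb E (X : Rb)).restrictScalars ℂ

/-- An (a,b)-module structure: `E` is a free finite-rank `ℂ[[b]]`-module
and `a` is a `ℂ`-linear, `b`-adically continuous endomorphism with
`a·b − b·a = b²`; equivalently, `a(S·x) = S·a(x) + b²·S'(b)·x` for all
`S ∈ ℂ[[b]]`. -/
def IsABMod (a : E →ₗ[ℂ] E) : Prop :=
  ∀ (S : Rb) (x : E), a (S • x) = S • a x + ((X : Rb) ^ 2 * derivative ℂ S) • x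

/-- The operators `Tⱼ = bʲ·(b⁻¹a)ʲ`, defined recursively by `T₀ = id`,
`T_{j+1} = (a − j·b)∘Tⱼ`. -/
def Tj (a : E →ₗ[ℂ] E) : ℕ → (E →ₗ[ℂ] E)
  | 0 => LinearMap.id
  | (j + 1) => (a - (j : ℂ) • bop) ∘ₗ Tj a j

/-- The `ℂ`-subspace `Σ_{j=0}^{k} aʲ·b^{k−j+1}·E`. -/
def Psi (a : E →ₗ[ℂ] E) (k : ℕ) : Submodule ℂ E :=
  ⨆ j ∈ Finset.range (k + 1),
    Submodule.map (a ^ j) ((bpow (k - j + 1) ⊤).restrictScalars ℂ)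

/-- The regularity condition `a^{k+1}·E ⊆ Σ_{j=0}^{k} aʲ·b^{k−j+1}·E`. -/
def RegCond (a : E →ₗ[ℂ] E) (k : ℕ) : Prop :=
  ∀ x : E, (a ^ (k + 1)) x ∈ Psi a k

/-- `E` is regular (equivalently: some regularity condition holds). -/
def IsRegularAB (a : E →ₗ[ℂ] E) : Prop := ∃ k, RegCond a k

/-- The regularity order `or(E)`. -/
def regOrder (a : E →ₗ[ℂ] E) : ℕ := sInf {k | RegCond a k}

/-- `b^k·E^♯ = b^k·Φ_k(E) = Σ_{j=0}^{k} b^{k−j}·Tⱼ(E)`: the saturation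
`E^♯ = Σ_j (b⁻¹a)ʲ·E` of `E`, renormalized by `b^k` so as to live inside `E`. -/
def Wsat (a : E →ₗ[ℂ] E) (k : ℕ) : Submodule Rb E :=
  Submodule.span Rb
    (⋃ j ∈ Finset.range (k + 1), Set.range fun x : E => ((X : Rb) ^ (k - j)) • (Tj a j x))

/-- A submodule `G ⊆ E` is a simple-pole submodule when `a·G ⊆ b·G`. -/
def SimplePoleSub (a : E →ₗ[ℂ] E) (G : Submodule Rb E) : Prop :=
  ∀ x ∈ G, a x ∈ bpow 1 G

/-- The index `δ(E)`: the smallest `m` with `E^♯ ⊆ b^{−m}·E`,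
i.e. `bᵐ·E^♯ ⊆ E`, i.e. `bᵐ·(b^k·E^♯) ⊆ b^k·E` for `k = or(E)`. -/
def deltaIdx (a : E →ₗ[ℂ] E) : ℕ :=
  sInf {m | bpow m (Wsat a (regOrder a)) ≤ bpow (regOrder a) ⊤}

/-- The biggest simple-pole submodule `E^b` of `E`. -/
def Eb (a : E →ₗ[ℂ] E) : Submodule Rb E := sSup {G | SimplePoleSub a G}

/-!
Let `k = or(E)` and `W = bᵏ·E^♯ = Wsat a k`. Regularity of order `k` gives `a·W ⊆ b·W`, i.e. `W`
is stable under `b⁻¹a`, so `bᵏ·Tⱼ(E) ⊆ bʲ·W` for every `j` (recall `Tⱼ = bʲ·(b⁻¹a)ʲ`). Hence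
`δ(E)` is the least `m` with `bᵐ·Tⱼ(E) ⊆ bʲ·E` for all `j`, a description of `bᵐ·E^♯ ⊆ E` that
no longer involves `or(E)`. For `x ∈ E′` we get `bᵐ·Tⱼ x = bʲ·z` with `z ∈ E`, and `z ∈ E′`
because `E/E′` has no `b`-torsion; so `m = δ(E)` also works for `E′`.
-/

section bpow

variable {M : Type} [AddCommGroup M] [Module Rb M]

open Pointwise in
lemma mem_bpow {n : ℕ} {G : Submodule Rb M} {x : M} :
    x ∈ bpow n G ↔ ∃ g ∈ G, (X : Rb) ^ n • g = x := by
  rw [bpow, Submodule.ideal_span_singleton_smul, ← SetLike.mem_coe,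
    Submodule.coe_pointwise_smul]
  exact Set.mem_smul_set

lemma smul_mem_bpow {n : ℕ} {G : Submodule Rb M} {g : M} (hg : g ∈ G) :
    (X : Rb) ^ n • g ∈ bpow n G :=
  mem_bpow.2 ⟨g, hg, rfl⟩

lemma X_smul_mem_bpow_one {G : Submodule Rb M} {g : M} (hg : g ∈ G) : (X : Rb) • g ∈ bpow 1 G := by
  simpa using smul_mem_bpow (n := 1) hg

lemma bpow_bpow (m n : ℕ) (G : Submodule Rb M) : bpow m (bpow n G) = bpow (m + n) G := by
  rw [bpow, bpow, bpow, ← Submodule.mul_smul, Ideal.span_singleton_mul_span_singleton, pow_add]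

lemma X_smul_mem_bpow_succ {n : ℕ} {G : Submodule Rb M} {y : M} (hy : y ∈ bpow n G) :
    (X : Rb) • y ∈ bpow (n + 1) G := by
  obtain ⟨g, hg, rfl⟩ := mem_bpow.1 hy
  rw [smul_smul, ← pow_succ']
  exact smul_mem_bpow hg

end bpow

lemma IsABMod.map_X_pow_smul {M : Type} [AddCommGroup M] [Module Rb M] [Module ℂ M]
    {a : M →ₗ[ℂ] M} (ha : IsABMod a) (n : ℕ) (y : M) :
    a ((X : Rb) ^ n • y) = (X : Rb) ^ n • (a y + (n : Rb) • (X : Rb) • y) := by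
  induction n with
  | zero => simp
  | succ n ih =>
    have hX := ha X ((X : Rb) ^ n • y)
    rw [derivative_X, mul_one, ih] at hX
    rw [pow_succ', mul_smul, hX]
    simp only [smul_add, smul_smul, add_assoc, ← add_smul]
    push_cast
    ring_nf

lemma IsABMod.apply_mem_bpow {M : Type} [AddCommGroup M] [Module Rb M] [Module ℂ M]
    {a : M →ₗ[ℂ] M} (ha : IsABMod a) {n : ℕ} {W W' : Submodule Rb M}
    (hW : ∀ w ∈ W, a w ∈ W') (hX : ∀ w ∈ W, (X : Rb) • w ∈ W') {y : M} (hy : y ∈ bpow n W) :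
    a y ∈ bpow n W' := by
  obtain ⟨w, hw, rfl⟩ := mem_bpow.1 hy
  rw [ha.map_X_pow_smul]
  exact smul_mem_bpow (add_mem (hW w hw) (W'.smul_mem _ (hX w hw)))

lemma IsABMod.sub_smul_X_smul_mem_bpow {M : Type} [AddCommGroup M] [Module Rb M] [Module ℂ M]
    {a : M →ₗ[ℂ] M} (ha : IsABMod a) {W : Submodule Rb M} (hW : SimplePoleSub a W)
    {j : ℕ} {y : M} (hy : y ∈ bpow j W) (c : Rb) :
    a y - c • (X : Rb) • y ∈ bpow (j + 1) W := by
  refine sub_mem ?_ (Submodule.smul_mem _ _ (X_smul_mem_bpow_succ hy))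
  rw [← bpow_bpow]
  exact ha.apply_mem_bpow hW (fun _ => X_smul_mem_bpow_one) hy

lemma Tj_succ_apply (a : E →ₗ[ℂ] E) (j : ℕ) (x : E) :
    Tj a (j + 1) x = a (Tj a j x) - (j : Rb) • (X : Rb) • Tj a j x := by
  rw [Tj, LinearMap.comp_apply, LinearMap.sub_apply, LinearMap.smul_apply, bop,
    LinearMap.restrictScalars_apply, LinearMap.lsmul_apply, ← algebraMap_smul Rb (j : ℂ),
    map_natCast]

lemma Wsat_le_iff {a : E →ₗ[ℂ] E} {k : ℕ} {N : Submodule Rb E} :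
    Wsat a k ≤ N ↔ ∀ i ≤ k, ∀ x, (X : Rb) ^ (k - i) • Tj a i x ∈ N := by
  simp only [Wsat, Submodule.span_le, Set.iUnion₂_subset_iff, Finset.mem_range,
    Set.range_subset_iff, SetLike.mem_coe, Nat.lt_succ_iff]

lemma X_pow_smul_Tj_mem_Wsat (a : E →ₗ[ℂ] E) {i k : ℕ} (hik : i ≤ k) (x : E) :
    (X : Rb) ^ (k - i) • Tj a i x ∈ Wsat a k :=
  Wsat_le_iff.1 le_rfl i hik x

lemma Tj_mem_Wsat (a : E →ₗ[ℂ] E) (k : ℕ) (x : E) : Tj a k x ∈ Wsat a k := by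
  simpa using X_pow_smul_Tj_mem_Wsat a le_rfl x

lemma X_pow_smul_mem_Wsat_add (a : E →ₗ[ℂ] E) {k : ℕ} (d : ℕ) {w : E} (hw : w ∈ Wsat a k) :
    (X : Rb) ^ d • w ∈ Wsat a (k + d) := by
  have : Wsat a k ≤ (Wsat a (k + d)).comap (LinearMap.lsmul Rb E ((X : Rb) ^ d)) :=
    Wsat_le_iff.2 fun i hi x => by
      rw [Submodule.mem_comap, LinearMap.lsmul_apply, smul_smul, ← pow_add,
        show d + (k - i) = k + d - i by omega]
      exact X_pow_smul_Tj_mem_Wsat a (by omega) x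
  exact this hw

lemma X_smul_mem_Wsat_succ (a : E →ₗ[ℂ] E) {k : ℕ} {w : E} (hw : w ∈ Wsat a k) :
    (X : Rb) • w ∈ Wsat a (k + 1) := by
  simpa using X_pow_smul_mem_Wsat_add a 1 hw

namespace IsABMod

variable {a : E →ₗ[ℂ] E}

lemma apply_X_pow_smul_Tj (ha : IsABMod a) (n i : ℕ) (x : E) :
    a ((X : Rb) ^ n • Tj a i x)
      = (X : Rb) ^ n • Tj a (i + 1) x
        + ((i + n : ℕ) : Rb) • (X : Rb) • (X : Rb) ^ n • Tj a i x := by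
  rw [ha.map_X_pow_smul, Tj_succ_apply]
  simp only [smul_add, smul_sub, smul_smul]
  rw [sub_eq_add_neg, ← neg_smul, add_assoc, ← add_smul]
  congr 2
  push_cast
  ring

/-- By the Leibniz rule `a(S·w) = S·a(w) + b²S'·w`, it suffices to check generators,
provided `b·Wsat a k ⊆ N`. -/
lemma apply_mem_of_mem_Wsat (ha : IsABMod a) {k : ℕ} {N : Submodule Rb E}
    (hgen : ∀ i ≤ k, ∀ x, a ((X : Rb) ^ (k - i) • Tj a i x) ∈ N)
    (hX : ∀ w ∈ Wsat a k, (X : Rb) • w ∈ N) {w : E} (hw : w ∈ Wsat a k) : a w ∈ N := by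
  induction hw using Submodule.span_induction with
  | mem g hg =>
    simp only [Set.mem_iUnion, Set.mem_range, Finset.mem_range, Nat.lt_succ_iff] at hg
    obtain ⟨i, hi, x, rfl⟩ := hg
    exact hgen i hi x
  | zero => simp
  | add u v _ _ hu hv => rw [map_add]; exact add_mem hu hv
  | smul S w hw h =>
    rw [ha S w, pow_two, mul_assoc, mul_smul, mul_comm, mul_smul]
    exact add_mem (N.smul_mem S h) (N.smul_mem _ (N.smul_mem _ (hX w hw)))

lemma apply_mem_Wsat_succ (ha : IsABMod a) {k : ℕ} {w : E} (hw : w ∈ Wsat a k) :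
    a w ∈ Wsat a (k + 1) := by
  refine ha.apply_mem_of_mem_Wsat (fun i hi x => ?_) (fun _ => X_smul_mem_Wsat_succ a) hw
  rw [ha.apply_X_pow_smul_Tj]
  refine add_mem ?_
    (Submodule.smul_mem _ _ (X_smul_mem_Wsat_succ a (X_pow_smul_Tj_mem_Wsat a hi x)))
  rw [show k - i = k + 1 - (i + 1) by omega]
  exact X_pow_smul_Tj_mem_Wsat a (by omega) x

lemma pow_apply_X_pow_smul_mem_bpow (ha : IsABMod a) (j n : ℕ) (x : E) :
    (a ^ j) ((X : Rb) ^ n • x) ∈ bpow n (Wsat a j) := by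
  induction j with
  | zero =>
    rw [pow_zero, Module.End.one_apply]
    exact smul_mem_bpow (Tj_mem_Wsat a 0 x)
  | succ j ih =>
    rw [pow_succ', Module.End.mul_apply]
    exact ha.apply_mem_bpow (fun _ => ha.apply_mem_Wsat_succ) (fun _ => X_smul_mem_Wsat_succ a) ih

lemma Psi_le_bpow_one_Wsat (ha : IsABMod a) (k : ℕ) :
    Psi a k ≤ (bpow 1 (Wsat a k)).restrictScalars ℂ := by
  refine iSup₂_le fun j hj => ?_
  rintro _ ⟨z, hz, rfl⟩
  obtain ⟨g, -, rfl⟩ := mem_bpow.1 hz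
  obtain ⟨w, hw, hwe⟩ := mem_bpow.1 (ha.pow_apply_X_pow_smul_mem_bpow j (k - j + 1) g)
  have hjk : j + (k - j) = k := by have := Finset.mem_range.1 hj; omega
  have hXw := X_pow_smul_mem_Wsat_add a (k - j) hw
  rw [hjk] at hXw
  rw [Submodule.restrictScalars_mem, ← hwe, pow_succ', mul_smul]
  exact X_smul_mem_bpow_one hXw

lemma Tj_succ_sub_pow_apply_mem (ha : IsABMod a) (j : ℕ) (x : E) :
    Tj a (j + 1) x - (a ^ (j + 1)) x ∈ bpow 1 (Wsat a j) := by
  induction j with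
  | zero => simp [Tj]
  | succ j ih =>
    have hdiff : Tj a (j + 2) x - (a ^ (j + 2)) x
        = a (Tj a (j + 1) x - (a ^ (j + 1)) x)
          - ((j + 1 : ℕ) : Rb) • (X : Rb) • Tj a (j + 1) x := by
      rw [Tj_succ_apply, pow_succ' a (j + 1), Module.End.mul_apply, map_sub]
      abel
    rw [hdiff]
    refine sub_mem ?_ (Submodule.smul_mem _ _ (X_smul_mem_bpow_one (Tj_mem_Wsat a _ x)))
    exact ha.apply_mem_bpow (fun _ => ha.apply_mem_Wsat_succ) (fun _ => X_smul_mem_Wsat_succ a) ih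

lemma Tj_succ_mem_of_regCond (ha : IsABMod a) {k : ℕ} (hk : RegCond a k) (x : E) :
    Tj a (k + 1) x ∈ bpow 1 (Wsat a k) := by
  rw [← sub_add_cancel (Tj a (k + 1) x) ((a ^ (k + 1)) x)]
  exact add_mem (ha.Tj_succ_sub_pow_apply_mem k x) (ha.Psi_le_bpow_one_Wsat k (hk x))

lemma simplePoleSub_Wsat (ha : IsABMod a) {k : ℕ} (hk : RegCond a k) :
    SimplePoleSub a (Wsat a k) := by
  refine fun w => ha.apply_mem_of_mem_Wsat (fun i hi x => ?_) (fun _ => X_smul_mem_bpow_one)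
  rw [ha.apply_X_pow_smul_Tj]
  refine add_mem ?_ (Submodule.smul_mem _ _ (X_smul_mem_bpow_one (X_pow_smul_Tj_mem_Wsat a hi x)))
  rcases hi.eq_or_lt with rfl | hlt
  · simpa using ha.Tj_succ_mem_of_regCond hk x
  · rw [show k - i = k - (i + 1) + 1 by omega, pow_succ', mul_smul]
    exact X_smul_mem_bpow_one (X_pow_smul_Tj_mem_Wsat a hlt x)

/-- `bᵏ·Tⱼ = (a - (j-1+k)b)∘⋯∘(a - kb)∘bᵏ`, and each factor raises the `b`-adic
order relative to a simple-pole `W` by one. -/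
lemma X_pow_smul_Tj_mem_bpow (ha : IsABMod a) {W : Submodule Rb E} (hW : SimplePoleSub a W)
    {k : ℕ} {x : E} (hx : (X : Rb) ^ k • x ∈ W) (j : ℕ) :
    (X : Rb) ^ k • Tj a j x ∈ bpow j W := by
  induction j with
  | zero => simpa [Tj] using smul_mem_bpow (n := 0) hx
  | succ j ih =>
    have hcomm : (X : Rb) ^ k • Tj a (j + 1) x
        = a ((X : Rb) ^ k • Tj a j x)
          - ((j + k : ℕ) : Rb) • (X : Rb) • (X : Rb) ^ k • Tj a j x := by
      rw [ha.apply_X_pow_smul_Tj, add_comm j k]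
      abel
    rw [hcomm]
    exact ha.sub_smul_X_smul_mem_bpow hW ih _

end IsABMod

lemma deltaIdx_le_of_X_pow_smul_Tj_mem {a : E →ₗ[ℂ] E} {m : ℕ}
    (h : ∀ j x, (X : Rb) ^ m • Tj a j x ∈ bpow j ⊤) : deltaIdx a ≤ m := by
  refine Nat.sInf_le fun y hy => ?_
  obtain ⟨w, hw, rfl⟩ := mem_bpow.1 hy
  have : Wsat a (regOrder a) ≤ (bpow (regOrder a) ⊤).comap (LinearMap.lsmul Rb E ((X : Rb) ^ m)) :=
    Wsat_le_iff.2 fun i hi x => by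
      obtain ⟨z, -, hz⟩ := mem_bpow.1 (h i x)
      rw [Submodule.mem_comap, LinearMap.lsmul_apply, smul_comm, ← hz, smul_smul, ← pow_add,
        Nat.sub_add_cancel hi]
      exact smul_mem_bpow Submodule.mem_top
  exact this hw

lemma IsABMod.X_pow_deltaIdx_smul_Tj_mem [Module.IsTorsionFree Rb E] {a : E →ₗ[ℂ] E}
    (ha : IsABMod a) (hreg : IsRegularAB a) (j : ℕ) (x : E) :
    (X : Rb) ^ deltaIdx a • Tj a j x ∈ bpow j ⊤ := by
  set k := regOrder a
  have hk : RegCond a k := Nat.sInf_mem hreg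
  have hδ : bpow (deltaIdx a) (Wsat a k) ≤ bpow k ⊤ :=
    Nat.sInf_mem (s := {m | bpow m (Wsat a k) ≤ bpow k ⊤}) ⟨k, Submodule.smul_mono le_rfl le_top⟩
  obtain ⟨w, hw, hwT⟩ := mem_bpow.1 <| ha.X_pow_smul_Tj_mem_bpow (k := k) (x := x)
    (ha.simplePoleSub_Wsat hk) (X_pow_smul_Tj_mem_Wsat a (Nat.zero_le k) x) j
  obtain ⟨z, -, hz⟩ := mem_bpow.1 (hδ (smul_mem_bpow hw))
  refine mem_bpow.2
    ⟨z, Submodule.mem_top, smul_right_injective E (pow_ne_zero k (X_ne_zero (R := ℂ))) ?_⟩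
  calc (X : Rb) ^ k • (X : Rb) ^ j • z
      = (X : Rb) ^ j • (X : Rb) ^ k • z := smul_comm _ _ _
    _ = (X : Rb) ^ deltaIdx a • (X : Rb) ^ j • w := by rw [hz, smul_comm]
    _ = (X : Rb) ^ k • (X : Rb) ^ deltaIdx a • Tj a j x := by rw [hwT, smul_comm]

lemma coe_Tj {E' : Submodule Rb E} {a : E →ₗ[ℂ] E} {a' : E' →ₗ[ℂ] E'}
    (ha' : ∀ x : E', (a' x : E) = a x) (j : ℕ) (x : E') : (Tj a' j x : E) = Tj a j x := by
  induction j with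
  | zero => rfl
  | succ j ih => simp [Tj_succ_apply, ha', ih]

lemma Submodule.mem_of_X_pow_smul_mem {M : Type} [AddCommGroup M] [Module Rb M] {N : Submodule Rb M}
    (htor : ∀ x : M, (X : Rb) • x ∈ N → x ∈ N) {n : ℕ} {z : M} (hz : (X : Rb) ^ n • z ∈ N) :
    z ∈ N := by
  induction n generalizing z with
  | zero => simpa using hz
  | succ n ih => exact htor z (ih (by rwa [smul_smul, ← pow_succ]))

theorem stmt_10_general [Module.Free Rb E]
    (a : E →ₗ[ℂ] E) (ha : IsABMod a) (hreg : IsRegularAB a)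
    (E' : Submodule Rb E)
    (a' : E' →ₗ[ℂ] E') (ha' : ∀ x : E', (a' x : E) = a (x : E))
    (htor : ∀ x : E, (X : Rb) • x ∈ E' → x ∈ E') :
    deltaIdx a' ≤ deltaIdx a := by
  refine deltaIdx_le_of_X_pow_smul_Tj_mem fun j x => ?_
  obtain ⟨z, -, hz⟩ := mem_bpow.1 (ha.X_pow_deltaIdx_smul_Tj_mem hreg j (x : E))
  have hzE' : z ∈ E' := by
    refine Submodule.mem_of_X_pow_smul_mem htor (n := j) ?_
    rw [hz, ← coe_Tj ha']
    exact E'.smul_mem _ (Tj a' j x).2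
  refine mem_bpow.2 ⟨⟨z, hzE'⟩, Submodule.mem_top, Subtype.ext ?_⟩
  simp [coe_Tj ha', hz]

/-- If `E′ ⊆ E` is a sub-(a,b)-module of a regular (a,b)-module `E` such that
`E/E′` has no `b`-torsion, then `δ(E′) ≤ δ(E)`. -/
theorem stmt_10 [Module.Free Rb E] [Module.Finite Rb E]
    (a : E →ₗ[ℂ] E) (ha : IsABMod a) (hreg : IsRegularAB a)
    (E' : Submodule Rb E) (hstab : ∀ x ∈ E', a x ∈ E')
    (a' : E' →ₗ[ℂ] E') (ha' : ∀ x : E', (a' x : E) = a (x : E))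
    (htor : ∀ x : E, (X : Rb) • x ∈ E' → x ∈ E') :
    deltaIdx a' ≤ deltaIdx a :=
  stmt_10_general a ha hreg E' a' ha' htor
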